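/- arXiv:1404.3396 — 2 statements merged into one kernel-verified Lean document; each statement's English description precedes it below -/
import Mathlib

section
/- Let f : {-1,1}^n → ℝ have degree at most d. Then ‖Lf‖_1 ≤ d² ‖f‖_1, where Lf = Σ_{S} |S| f̂(S) χ_S is the discrete Laplacian and ‖·‖_1 is the L1 norm under the uniform measure on {-1,1}^n. -/
open Finset

/-- The Fourier character χ_S evaluated at a point of the Boolean cube
(coordinates encoded by `Bool`, with `true ↦ 1` and `false ↦ -1`). -/
noncomputable def char {n : ℕ} (S : Finset (Fin n)) (x : Fin n → Bool) : ℝ :=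
  ∏ i ∈ S, (if x i then (1 : ℝ) else -1)

/-- The multilinear polynomial with Fourier coefficients `c`, evaluated on the cube. -/
noncomputable def eval' {n : ℕ} (c : Finset (Fin n) → ℝ) (x : Fin n → Bool) : ℝ :=
  ∑ S : Finset (Fin n), c S * char S x

/-- Flip the i-th coordinate. -/
def flipAt {n : ℕ} (x : Fin n → Bool) (i : Fin n) : Fin n → Bool :=
  Function.update x i (!(x i))

/-- Expectation over the uniform measure on the cube. -/
noncomputable def Ex {n : ℕ} (g : (Fin n → Bool) → ℝ) : ℝ :=
  (∑ x : Fin n → Bool, g x) / 2 ^ n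

/-!
For `|ρ| ≤ 1` the noise operator `T_ρ f = ∑_S ρ^|S| f̂(S) χ_S` averages `f` against the
nonnegative kernel `∏ᵢ (1 + ρ xᵢ zᵢ)` of mass one, so it contracts the `L¹` norm.
Pair `L f` with `h = sign (L f)`: the map `ρ ↦ 𝔼[h · T_ρ f]` is a polynomial of degree at most `d`,
bounded by `‖f‖₁` on `[-1, 1]`, and its derivative at `1` is `𝔼[h · L f] = ‖L f‖₁`.
Markov's inequality `P'(1) ≤ d² ‖P‖_{[-1,1]}` finishes the proof.
-/

open Polynomial

/-- Markov's inequality at the endpoint. -/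
theorem derivative_eval_one_le_of_abs_le {n : ℕ} {P : ℝ[X]} {M : ℝ} (hdeg : P.degree ≤ n)
    (hbound : ∀ x ∈ Set.Icc (-1 : ℝ) 1, |P.eval x| ≤ M) :
    (derivative P).eval 1 ≤ n ^ 2 * M := by
  rcases (abs_nonneg _).trans (hbound 0 (by norm_num)) |>.eq_or_lt with rfl | hM
  · suffices P = 0 by simp [this]
    refine P.eq_zero_of_infinite_isRoot ((Set.Icc_infinite (by norm_num : (-1 : ℝ) < 1)).mono ?_)
    exact fun x hx => abs_nonpos_iff.mp (hbound x hx)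
  have hmarkov := Chebyshev.eval_iterate_derivative_le_of_forall_abs_le_one (k := 1) le_rfl
    ((degree_smul_le _ _).trans hdeg) (P := M⁻¹ • P) fun x hx => by
      rw [eval_smul, smul_eq_mul, abs_mul, abs_inv, abs_of_pos hM, inv_mul_le_one₀ hM]
      exact hbound x hx
  rw [Function.iterate_one, derivative_smul, eval_smul, smul_eq_mul,
    Chebyshev.derivative_T_eval_one, inv_mul_le_iff₀ hM, mul_comm] at hmarkov
  exact_mod_cast hmarkov

def spin (b : Bool) : ℝ := if b then 1 else -1

section Cube

variable {n : ℕ}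

/-- `T_ρ f x = 𝔼_z [noiseKernel ρ x z * f z]`. -/
noncomputable def noiseKernel (ρ : ℝ) (x z : Fin n → Bool) : ℝ :=
  ∏ i, (1 + ρ * spin (x i) * spin (z i))

lemma noiseKernel_comm (ρ : ℝ) (x z : Fin n → Bool) :
    noiseKernel ρ x z = noiseKernel ρ z x := by
  simp only [noiseKernel, mul_right_comm ρ]

lemma noiseKernel_nonneg {ρ : ℝ} (hρ : |ρ| ≤ 1) (x z : Fin n → Bool) :
    0 ≤ noiseKernel ρ x z := by
  refine prod_nonneg fun i _ => ?_
  have : |ρ * spin (x i) * spin (z i)| ≤ 1 := by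
    cases x i <;> cases z i <;> simpa [spin] using hρ
  linarith [neg_abs_le (ρ * spin (x i) * spin (z i))]

lemma sum_noiseKernel_mul_char (ρ : ℝ) (x : Fin n → Bool) (S : Finset (Fin n)) :
    ∑ z, noiseKernel ρ x z * char S z = 2 ^ n * (ρ ^ S.card * char S x) := by
  have hchar : ∀ z : Fin n → Bool, char S z = ∏ i, if i ∈ S then spin (z i) else 1 := fun z => by
    rw [prod_ite_mem, univ_inter]; rfl
  calc ∑ z, noiseKernel ρ x z * char S z
      = ∑ z : Fin n → Bool, ∏ i, (1 + ρ * spin (x i) * spin (z i)) *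
          (if i ∈ S then spin (z i) else 1) := by
        simp only [noiseKernel, hchar, ← prod_mul_distrib]
    _ = ∏ i, ∑ b, (1 + ρ * spin (x i) * spin b) * (if i ∈ S then spin b else 1) :=
        (Fintype.prod_sum fun i b => (1 + ρ * spin (x i) * spin b) *
          (if i ∈ S then spin b else 1)).symm
    _ = ∏ i, 2 * (if i ∈ S then ρ * spin (x i) else 1) := by
        refine prod_congr rfl fun i _ => ?_
        cases x i <;> split_ifs <;> norm_num [Fintype.sum_bool, spin] <;> ring
    _ = 2 ^ n * (ρ ^ S.card * char S x) := by
        rw [prod_mul_distrib, prod_const, card_univ, Fintype.card_fin, prod_ite_mem, univ_inter,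
          prod_mul_distrib, prod_const]
        rfl

lemma sum_noiseKernel (ρ : ℝ) (z : Fin n → Bool) :
    ∑ x, noiseKernel ρ x z = 2 ^ n := by
  simpa [noiseKernel_comm ρ _ z, char] using sum_noiseKernel_mul_char ρ z ∅

lemma sum_noiseKernel_mul_eval' (c : Finset (Fin n) → ℝ) (ρ : ℝ) (x : Fin n → Bool) :
    ∑ z, noiseKernel ρ x z * eval' c z = 2 ^ n * eval' (fun S => ρ ^ S.card * c S) x := by
  simp only [eval', mul_sum]
  rw [sum_comm]
  refine sum_congr rfl fun S _ => ?_
  simp only [mul_left_comm _ (c S), ← mul_sum, sum_noiseKernel_mul_char]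
  ring

lemma sum_abs_eval'_noise_le (c : Finset (Fin n) → ℝ) {ρ : ℝ} (hρ : |ρ| ≤ 1) :
    ∑ x, |eval' (fun S => ρ ^ S.card * c S) x| ≤ ∑ x, |eval' c x| := by
  refine le_of_mul_le_mul_left ?_ (by positivity : (0 : ℝ) < 2 ^ n)
  calc 2 ^ n * ∑ x, |eval' (fun S => ρ ^ S.card * c S) x|
      = ∑ x, |∑ z, noiseKernel ρ x z * eval' c z| := by
        simp only [mul_sum, sum_noiseKernel_mul_eval', abs_mul, abs_pow, abs_two]
    _ ≤ ∑ x, ∑ z, noiseKernel ρ x z * |eval' c z| := by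
        refine sum_le_sum fun x _ => (abs_sum_le_sum_abs _ _).trans_eq ?_
        simp only [abs_mul, abs_of_nonneg (noiseKernel_nonneg hρ _ _)]
    _ = 2 ^ n * ∑ z, |eval' c z| := by
        simp only [sum_comm (γ := Fin n → Bool), ← sum_mul, sum_noiseKernel, mul_sum]

/-- `ρ ↦ T_ρ f x` as a polynomial in `ρ`. -/
noncomputable def noisePoly (c : Finset (Fin n) → ℝ) (x : Fin n → Bool) : ℝ[X] :=
  ∑ S, C (c S * char S x) * X ^ S.card

lemma eval_noisePoly (c : Finset (Fin n) → ℝ) (x : Fin n → Bool) (ρ : ℝ) :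
    (noisePoly c x).eval ρ = eval' (fun S => ρ ^ S.card * c S) x := by
  simp only [noisePoly, eval', eval_finsetSum, eval_mul, eval_C, eval_pow, eval_X]
  exact sum_congr rfl fun S _ => by ring

lemma derivative_noisePoly_eval_one (c : Finset (Fin n) → ℝ) (x : Fin n → Bool) :
    (derivative (noisePoly c x)).eval 1 = eval' (fun S => (S.card : ℝ) * c S) x := by
  simp only [noisePoly, eval', derivative_sum, derivative_C_mul_X_pow, eval_finsetSum, eval_mul,
    eval_C, eval_pow, eval_X, one_pow, mul_one]
  exact sum_congr rfl fun S _ => by ring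

lemma degree_noisePoly_le {d : ℕ} {c : Finset (Fin n) → ℝ}
    (hdeg : ∀ S, c S ≠ 0 → S.card ≤ d) (x : Fin n → Bool) :
    (noisePoly c x).degree ≤ d := by
  refine (degree_sum_le _ _).trans (Finset.sup_le fun S _ => ?_)
  by_cases hS : c S = 0
  · simp [hS]
  · exact (degree_C_mul_X_pow_le _ _).trans (by exact_mod_cast hdeg S hS)

lemma sum_mul_eval'_laplacian_le {d : ℕ} {c : Finset (Fin n) → ℝ}
    (hdeg : ∀ S, c S ≠ 0 → S.card ≤ d) (h : (Fin n → Bool) → ℝ) (hh : ∀ x, |h x| ≤ 1) :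
    ∑ x, h x * eval' (fun S => (S.card : ℝ) * c S) x ≤ d ^ 2 * ∑ x, |eval' c x| := by
  set P := ∑ x, h x • noisePoly c x
  have hP_deg : P.degree ≤ d :=
    (degree_sum_le _ _).trans <| Finset.sup_le fun x _ =>
      (degree_smul_le _ _).trans (degree_noisePoly_le hdeg x)
  have hP_bound : ∀ ρ ∈ Set.Icc (-1 : ℝ) 1, |P.eval ρ| ≤ ∑ x, |eval' c x| := fun ρ hρ =>
    calc |P.eval ρ| = |∑ x, h x * eval' (fun S => ρ ^ S.card * c S) x| := by
          simp only [P, eval_finsetSum, eval_smul, smul_eq_mul, eval_noisePoly]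
      _ ≤ ∑ x, |eval' (fun S => ρ ^ S.card * c S) x| :=
          (abs_sum_le_sum_abs _ _).trans <| sum_le_sum fun x _ => by
            rw [abs_mul]; exact mul_le_of_le_one_left (abs_nonneg _) (hh x)
      _ ≤ ∑ x, |eval' c x| := sum_abs_eval'_noise_le c (abs_le.mpr hρ)
  have hP_deriv : (derivative P).eval 1 = ∑ x, h x * eval' (fun S => (S.card : ℝ) * c S) x := by
    simp only [P, derivative_sum, derivative_smul, eval_finsetSum, eval_smul, smul_eq_mul,
      derivative_noisePoly_eval_one]
  rw [← hP_deriv]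
  exact derivative_eval_one_le_of_abs_le hP_deg hP_bound

end Cube

theorem laplacian_L1_bound (n d : ℕ) (c : Finset (Fin n) → ℝ)
    (hdeg : ∀ S, c S ≠ 0 → S.card ≤ d) :
    Ex (fun x => |eval' (fun S => (S.card : ℝ) * c S) x|)
      ≤ (d : ℝ) ^ 2 * Ex (fun x => |eval' c x|) := by
  have hsign (y : ℝ) : |(SignType.sign y : ℝ)| ≤ 1 := by
    rcases SignType.sign y with _ | _ | _ <;> simp
  have hsum := sum_mul_eval'_laplacian_le hdeg _ fun x => hsign (eval' (fun S => S.card * c S) x)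
  simp only [sign_mul_self] at hsum
  unfold Ex
  rw [mul_div_assoc']
  exact div_le_div_of_nonneg_right hsum (by positivity)
end

section
/- Let f : {-1,1}^n → ℝ have degree at most d and let α ∈ (0,1). Then Inf^{(1)}[f] ≤ (max_{i} ‖f_i‖_1 / ‖T_α f_i‖_1) · d / √(1−α²), where f_i(x) = (f(x)−f(x⊕e_i))/2, assuming ‖f‖_∞ ≤ 1 and Δ(T_α f)(x) ≤ d/√(1−α²) for all x ∈ {-1,1}^n. -/
open Finset

lemma flipAt_apply {n : ℕ} (x : Fin n → Bool) (i j : Fin n) :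
    flipAt x i j = if j = i then !(x i) else x j := by
  simp [flipAt, Function.update]

lemma flipAt_flipAt {n : ℕ} (x : Fin n → Bool) (i : Fin n) :
    flipAt (flipAt x i) i = x := by
  funext j
  simp only [flipAt_apply]
  by_cases h : j = i <;> simp [h]

lemma flipAt_ne {n : ℕ} (x : Fin n → Bool) (i : Fin n) : flipAt x i ≠ x := by
  intro h
  have := congrFun h i
  simp [flipAt_apply] at this

lemma char_flipAt {n : ℕ} (S : Finset (Fin n)) (x : Fin n → Bool) (i : Fin n) :
    char S (flipAt x i) = (if i ∈ S then (-1 : ℝ) else 1) * char S x := by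
  by_cases hi : i ∈ S
  · simp only [hi, if_true, char]
    rw [← Finset.mul_prod_erase S _ hi, ← Finset.mul_prod_erase S _ hi]
    have h1 : ∀ j ∈ S.erase i, (if flipAt x i j then (1:ℝ) else -1) = (if x j then 1 else -1) := by
      intro j hj
      rw [flipAt_apply, if_neg (Finset.ne_of_mem_erase hj)]
    rw [Finset.prod_congr rfl h1]
    rw [flipAt_apply, if_pos rfl]
    ring_nf
    cases h : x i <;> simp [h] <;> ring
  · simp only [hi, if_false, one_mul, char]
    refine Finset.prod_congr rfl fun j hj => ?_
    have hji : j ≠ i := fun h => hi (h ▸ hj)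
    simp [flipAt_apply, hji]

lemma sum_char_mul {n : ℕ} (S T : Finset (Fin n)) :
    ∑ x : Fin n → Bool, char S x * char T x = if S = T then (2:ℝ) ^ n else 0 := by
  by_cases hST : S = T
  · subst hST
    simp only [if_pos rfl]
    have : ∀ x : Fin n → Bool, char S x * char S x = 1 := by
      intro x
      rw [char, ← Finset.prod_mul_distrib]
      refine Finset.prod_eq_one fun j _ => ?_
      by_cases h : x j <;> simp [h]
    rw [Finset.sum_congr rfl fun x _ => this x]
    simp [Finset.card_univ]
  · rw [if_neg hST]
    -- pick j in symmetric difference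
    have : ∃ j, (j ∈ S ∧ j ∉ T) ∨ (j ∈ T ∧ j ∉ S) := by
      by_contra h
      push_neg at h
      apply hST
      ext j
      have := h j
      tauto
    obtain ⟨j, hj⟩ := this
    have key : ∀ x, char S (flipAt x j) * char T (flipAt x j) = -(char S x * char T x) := by
      intro x
      rw [char_flipAt, char_flipAt]
      rcases hj with ⟨h1, h2⟩ | ⟨h1, h2⟩ <;> simp [h1, h2] <;> ring
    refine Finset.sum_involution (fun x _ => flipAt x j) ?_ ?_ ?_ ?_
    · intro x _; rw [key]; ring
    · intro x _ _; exact flipAt_ne x j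
    · intro x _; exact Finset.mem_univ _
    · intro x _; exact flipAt_flipAt x j

lemma eval'_coeff_zero {n : ℕ} (c : Finset (Fin n) → ℝ) (h : ∀ x, eval' c x = 0)
    (T : Finset (Fin n)) : c T = 0 := by
  have h2 : ∑ x : Fin n → Bool, eval' c x * char T x = 0 := by
    simp [h]
  rw [Finset.sum_congr rfl (fun x _ => by rw [eval', Finset.sum_mul])] at h2
  rw [Finset.sum_comm] at h2
  have h3 : ∀ S : Finset (Fin n), ∑ x : Fin n → Bool, c S * char S x * char T x
      = c S * (if S = T then (2:ℝ)^n else 0) := by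
    intro S
    rw [← sum_char_mul S T, Finset.mul_sum]
    exact Finset.sum_congr rfl fun x _ => by ring
  rw [Finset.sum_congr rfl fun S _ => h3 S] at h2
  simp only [mul_ite, mul_zero, Finset.sum_ite_eq' Finset.univ, Finset.mem_univ, if_pos] at h2
  have : (2:ℝ)^n ≠ 0 := by positivity
  exact (mul_eq_zero.mp h2).resolve_right this

lemma diff_eq_eval {n : ℕ} (c : Finset (Fin n) → ℝ) (x : Fin n → Bool) (i : Fin n) :
    eval' c x - eval' c (flipAt x i)
      = eval' (fun S => if i ∈ S then 2 * c S else 0) x := by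
  simp only [eval', ← Finset.sum_sub_distrib]
  refine Finset.sum_congr rfl fun S _ => ?_
  rw [char_flipAt]
  by_cases h : i ∈ S <;> simp [h] <;> ring

lemma zero_case {n : ℕ} (c : Finset (Fin n) → ℝ) {α : ℝ} (hα0 : 0 < α) (i : Fin n)
    (h : ∀ x, eval' (fun S => α ^ S.card * c S) x
        = eval' (fun S => α ^ S.card * c S) (flipAt x i)) :
    ∀ x, eval' c x = eval' c (flipAt x i) := by
  have h0 : ∀ x, eval' (fun S => if i ∈ S then 2 * (α ^ S.card * c S) else 0) x = 0 := by
    intro x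
    rw [← diff_eq_eval, h x, sub_self]
  have hc : ∀ S : Finset (Fin n), i ∈ S → c S = 0 := by
    intro S hS
    have := eval'_coeff_zero _ h0 S
    rw [if_pos hS] at this
    have hαne : (α : ℝ) ^ S.card ≠ 0 := pow_ne_zero _ (ne_of_gt hα0)
    have h2 : α ^ S.card * c S = 0 := by linarith
    exact ((mul_eq_zero.mp h2).resolve_left hαne)
  intro x
  have : eval' c x - eval' c (flipAt x i) = 0 := by
    rw [diff_eq_eval]
    rw [eval']
    refine Finset.sum_eq_zero fun S _ => ?_
    by_cases hS : i ∈ S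
    · simp [hS, hc S hS]
    · simp [hS]
  linarith

lemma Ex_nonneg {n : ℕ} {g : (Fin n → Bool) → ℝ} (h : ∀ x, 0 ≤ g x) : 0 ≤ Ex g := by
  unfold Ex
  exact div_nonneg (Finset.sum_nonneg fun x _ => h x) (by positivity)

lemma Ex_eq_zero_iff {n : ℕ} {g : (Fin n → Bool) → ℝ} (h : ∀ x, 0 ≤ g x) :
    Ex g = 0 ↔ ∀ x, g x = 0 := by
  unfold Ex
  rw [div_eq_zero_iff]
  constructor
  · rintro (h1 | h1)
    · intro x
      exact (Finset.sum_eq_zero_iff_of_nonneg (fun y _ => h y)).mp h1 x (Finset.mem_univ x)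
    · exact absurd h1 (pow_ne_zero n two_ne_zero)
  · intro h1
    left
    exact Finset.sum_eq_zero fun x _ => h1 x

theorem influence_via_noise (n d : ℕ) (hn : 0 < n) (c : Finset (Fin n) → ℝ) (α : ℝ)
    (hα0 : 0 < α) (hα1 : α < 1)
    (hdeg : ∀ S, c S ≠ 0 → S.card ≤ d)
    (hbd : ∀ x, |eval' c x| ≤ 1)
    (hsar : ∀ x, ∑ i : Fin n,
        |eval' (fun S => α ^ S.card * c S) x
          - eval' (fun S => α ^ S.card * c S) (flipAt x i)| / 2
      ≤ (d : ℝ) / Real.sqrt (1 - α ^ 2)) :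
    (∑ i : Fin n, Ex (fun x => |(eval' c x - eval' c (flipAt x i)) / 2|))
      ≤ (Finset.univ.sup' (Finset.univ_nonempty_iff.2 (Fin.pos_iff_nonempty.1 hn))
          (fun i : Fin n =>
            Ex (fun x => |(eval' c x - eval' c (flipAt x i)) / 2|) /
            Ex (fun x => |(eval' (fun S => α ^ S.card * c S) x
              - eval' (fun S => α ^ S.card * c S) (flipAt x i)) / 2|)))
        * ((d : ℝ) / Real.sqrt (1 - α ^ 2)) := by
  set C := (d : ℝ) / Real.sqrt (1 - α ^ 2) with hC
  set a : Fin n → ℝ := fun i => Ex (fun x => |(eval' c x - eval' c (flipAt x i)) / 2|) with ha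
  set b : Fin n → ℝ := fun i => Ex (fun x => |(eval' (fun S => α ^ S.card * c S) x
      - eval' (fun S => α ^ S.card * c S) (flipAt x i)) / 2|) with hb
  set M := (Finset.univ.sup' (Finset.univ_nonempty_iff.2 (Fin.pos_iff_nonempty.1 hn))
      (fun i : Fin n => a i / b i)) with hM
  have hane : ∀ i, 0 ≤ a i := fun i => Ex_nonneg (fun x => abs_nonneg _)
  have hbne : ∀ i, 0 ≤ b i := fun i => Ex_nonneg (fun x => abs_nonneg _)
  have hMle : ∀ i, a i / b i ≤ M := fun i => Finset.le_sup' (f := fun j : Fin n => a j / b j) (Finset.mem_univ i)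
  have hM0 : 0 ≤ M := le_trans (div_nonneg (hane ⟨0, hn⟩) (hbne ⟨0, hn⟩)) (hMle ⟨0, hn⟩)
  have key : ∀ i, a i ≤ M * b i := by
    intro i
    rcases eq_or_lt_of_le (hbne i) with h | h
    · have hz := (Ex_eq_zero_iff (fun x => abs_nonneg _)).mp h.symm
      have heq : ∀ x, eval' (fun S => α ^ S.card * c S) x
          = eval' (fun S => α ^ S.card * c S) (flipAt x i) := by
        intro x
        have := hz x
        rw [abs_eq_zero, div_eq_zero_iff] at this
        rcases this with h1 | h1
        · linarith
        · norm_num at h1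
      have hzero := zero_case c hα0 i heq
      have haz : a i = 0 := (Ex_eq_zero_iff (fun x => abs_nonneg _)).mpr
        (fun x => by rw [hzero x]; simp)
      rw [haz, ← h, mul_zero]
    · calc a i = (a i / b i) * b i := (div_mul_cancel₀ _ h.ne').symm
        _ ≤ M * b i := mul_le_mul_of_nonneg_right (hMle i) (le_of_lt h)
  have sum_b : ∑ i, b i ≤ C := by
    simp only [hb, Ex, ← Finset.sum_div]
    rw [div_le_iff₀ (by positivity : (0:ℝ) < (2:ℝ)^n), Finset.sum_comm]
    calc ∑ x : Fin n → Bool, ∑ i : Fin n,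
          |(eval' (fun S => α ^ S.card * c S) x
            - eval' (fun S => α ^ S.card * c S) (flipAt x i)) / 2|
        = ∑ x : Fin n → Bool, ∑ i : Fin n,
          |eval' (fun S => α ^ S.card * c S) x
            - eval' (fun S => α ^ S.card * c S) (flipAt x i)| / 2 := by
          refine Finset.sum_congr rfl fun x _ => Finset.sum_congr rfl fun i _ => ?_
          rw [abs_div]
          norm_num
      _ ≤ ∑ x : Fin n → Bool, C := Finset.sum_le_sum fun x _ => hsar x
      _ = C * 2 ^ n := by
          rw [Finset.sum_const, Finset.card_univ]
          simp [mul_comm]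
  calc (∑ i, a i) ≤ ∑ i, M * b i := Finset.sum_le_sum fun i _ => key i
    _ = M * ∑ i, b i := (Finset.mul_sum _ _ _).symm
    _ ≤ M * C := mul_le_mul_of_nonneg_left sum_b hM0
end
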